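/- arXiv:2306.10075 — 6 statements merged into one kernel-verified Lean document; each statement's English description precedes it below -/
import Mathlib

section
/- Let A be a symmetric n×n real matrix with distinct indices i, j such that A i i ≠ A j j. Let t be a real root of the quadratic (1 − t²)·(A i j) + t·(A i i − A j j) = 0, and set c = (1 + t²)^{-1/2} and s = c·t. Then c² + s² = 1, and with G = G^{(i,j)}(c,s) the matrix A' = Gᵗ · A · G satisfies A' i j = 0. -/
open Matrix

/-- The Givens rotation matrix `G^{(i,j)}(c,s)`. -/
def givens (n : ℕ) (i j : Fin n) (c s : ℝ) : Matrix (Fin n) (Fin n) ℝ :=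
  fun k l =>
    if k = i ∧ l = i then c
    else if k = j ∧ l = j then c
    else if k = i ∧ l = j then s
    else if k = j ∧ l = i then -s
    else if k = l then 1
    else 0

private lemma sum_two_left {n : ℕ} (i j : Fin n) (hij : i ≠ j) (a b : ℝ) (f : Fin n → ℝ) :
    (∑ k, (if k = i then a else if k = j then b else 0) * f k) = a * f i + b * f j := by
  have : ∀ k : Fin n, (if k = i then a else if k = j then b else 0) * f k
      = (if k = i then a * f k else 0) + (if k = j then b * f k else 0) := by
    intro k
    by_cases h1 : k = i <;> by_cases h2 : k = j <;> simp_all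
  simp_rw [this, Finset.sum_add_distrib, Finset.sum_ite_eq', Finset.mem_univ, if_true]

private lemma sum_two_right {n : ℕ} (i j : Fin n) (hij : i ≠ j) (a b : ℝ) (f : Fin n → ℝ) :
    (∑ k, f k * (if k = i then a else if k = j then b else 0)) = f i * a + f j * b := by
  simp_rw [mul_comm (f _)]
  rw [sum_two_left i j hij a b f, mul_comm a, mul_comm b]

theorem givens_angle_from_tangent (n : ℕ) (A : Matrix (Fin n) (Fin n) ℝ)
    (hA : Aᵀ = A) (i j : Fin n) (hij : i ≠ j) (hdiag : A i i ≠ A j j)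
    (t : ℝ) (ht : (1 - t ^ 2) * A i j + t * (A i i - A j j) = 0)
    (c s : ℝ) (hc : c = (Real.sqrt (1 + t ^ 2))⁻¹) (hs : s = c * t) :
    c ^ 2 + s ^ 2 = 1 ∧
      ((givens n i j c s)ᵀ * A * givens n i j c s) i j = 0 := by
  have hpos : (0:ℝ) < 1 + t ^ 2 := by positivity
  have hc2 : c ^ 2 = (1 + t ^ 2)⁻¹ := by
    rw [hc, inv_pow, Real.sq_sqrt hpos.le]
  constructor
  · rw [hs, mul_pow, hc2]
    field_simp
  · have hGi : ∀ k : Fin n, givens n i j c s k i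
        = (if k = i then c else if k = j then (-s) else 0) := by
      intro k
      simp only [givens]
      by_cases h1 : k = i <;> by_cases h2 : k = j <;> simp_all [hij.symm]
    have hGj : ∀ k : Fin n, givens n i j c s k j
        = (if k = j then c else if k = i then s else 0) := by
      intro k
      simp only [givens]
      by_cases h1 : k = i <;> by_cases h2 : k = j <;> simp_all [hij.symm]
    have hAji : A j i = A i j := by
      conv_lhs => rw [← hA]
      rfl
    have h1 : ∀ l : Fin n, ((givens n i j c s)ᵀ * A) i l = c * A i l + (-s) * A j l := by
      intro l
      simp only [Matrix.mul_apply, Matrix.transpose_apply]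
      simp_rw [hGi]
      exact sum_two_left i j hij c (-s) (fun k => A k l)
    rw [Matrix.mul_apply]
    simp_rw [hGj]
    rw [sum_two_right j i hij.symm c s (fun l => ((givens n i j c s)ᵀ * A) i l), h1 j, h1 i]
    simp only [hAji, hs]
    ring_nf
    nlinarith [ht, sq_nonneg c]
end

section
/- Let A be a symmetric n×n real matrix, i ≠ j, and let c, s with c² + s² = 1 be chosen so that A' = Gᵗ · A · G satisfies A' i j = 0, where G = G^{(i,j)}(c,s). Then the squared off-diagonal norm decreases by exactly twice the square of the annihilated entry: off(A')² = off(A)² − 2·(A i j)², where off(M)² = Σ_{k ≠ l} (M k l)². -/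
open Matrix

/-- The squared off-diagonal (Frobenius) norm `off(M)²` of a matrix. -/
def offSq {n : ℕ} (M : Matrix (Fin n) (Fin n) ℝ) : ℝ :=
  ∑ k : Fin n, ∑ l : Fin n, if k ≠ l then (M k l) ^ 2 else 0

open Finset

section helpers
variable {n : ℕ} {i j : Fin n} {c s : ℝ}

lemma givens_col {k : Fin n} (hki : k ≠ i) (hkj : k ≠ j) (p : Fin n) :
    givens n i j c s p k = if p = k then 1 else 0 := by
  rcases eq_or_ne p k with h|h
  · subst h; simp [givens, hki, hkj]
  · simp [givens, hki, hkj, h, Ne.symm h]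

lemma givens_col_i (hij : i ≠ j) (p : Fin n) :
    givens n i j c s p i = if p = i then c else if p = j then -s else 0 := by
  rcases eq_or_ne p i with hpi|hpi
  · subst hpi; simp [givens, hij, hij.symm]
  · rcases eq_or_ne p j with hpj|hpj
    · subst hpj; simp [givens, hij, hij.symm, Ne.symm hij]
    · simp [givens, hij, hij.symm, hpi, hpj, Ne.symm hpi, Ne.symm hpj]

lemma givens_col_j (hij : i ≠ j) (p : Fin n) :
    givens n i j c s p j = if p = i then s else if p = j then c else 0 := by
  rcases eq_or_ne p i with hpi|hpi
  · subst hpi; simp [givens, hij, hij.symm]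
  · rcases eq_or_ne p j with hpj|hpj
    · subst hpj; simp [givens, hij, hij.symm, Ne.symm hij]
    · simp [givens, hij, hij.symm, hpi, hpj, Ne.symm hpi, Ne.symm hpj]

lemma givens_row {k : Fin n} (hki : k ≠ i) (hkj : k ≠ j) (p : Fin n) :
    givens n i j c s k p = if p = k then 1 else 0 := by
  rcases eq_or_ne p k with h|h
  · subst h; simp [givens, hki, hkj]
  · simp [givens, hki, hkj, h, Ne.symm h]

lemma givens_row_i (hij : i ≠ j) (p : Fin n) :
    givens n i j c s i p = if p = i then c else if p = j then s else 0 := by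
  rcases eq_or_ne p i with hpi|hpi
  · subst hpi; simp [givens, hij, hij.symm]
  · rcases eq_or_ne p j with hpj|hpj
    · subst hpj; simp [givens, hij, hij.symm, Ne.symm hij]
    · simp [givens, hij, hij.symm, hpi, hpj, Ne.symm hpi, Ne.symm hpj]

lemma givens_row_j (hij : i ≠ j) (p : Fin n) :
    givens n i j c s j p = if p = i then -s else if p = j then c else 0 := by
  rcases eq_or_ne p i with hpi|hpi
  · subst hpi; simp [givens, hij, hij.symm]
  · rcases eq_or_ne p j with hpj|hpj
    · subst hpj; simp [givens, hij, hij.symm, Ne.symm hij]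
    · simp [givens, hij, hij.symm, hpi, hpj, Ne.symm hpi, Ne.symm hpj]

lemma sum_two (hij : i ≠ j) (f : Fin n → ℝ) (hf : ∀ x, x ≠ i → x ≠ j → f x = 0) :
    ∑ x, f x = f i + f j := by
  rw [← Finset.sum_pair hij]
  exact (Finset.sum_subset (Finset.subset_univ _) (by
    intro x _ hx
    simp only [Finset.mem_insert, Finset.mem_singleton, not_or] at hx
    exact hf x hx.1 hx.2)).symm

lemma givens_mul_transpose (hij : i ≠ j) (hcs : c ^ 2 + s ^ 2 = 1) :
    givens n i j c s * (givens n i j c s)ᵀ = 1 := by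
  ext k l
  simp only [Matrix.mul_apply, Matrix.transpose_apply, Matrix.one_apply]
  by_cases hki : k = i
  · subst hki
    rw [sum_two hij _ (fun x hxi hxj => by rw [givens_row_i hij, if_neg hxi, if_neg hxj]; ring)]
    by_cases hli : l = k
    · subst hli
      simp [givens_row_i hij, hij, hij.symm]
      linear_combination hcs
    · by_cases hlj : l = j
      · subst hlj
        simp [givens_row_i hij, givens_row_j hij, hij, hij.symm, Ne.symm hli]
        ring
      · simp [givens_row_i hij, givens_row hli hlj, hij, hij.symm, Ne.symm hli, hli, Ne.symm hlj, hlj]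
  · by_cases hkj : k = j
    · subst hkj
      rw [sum_two hij _ (fun x hxi hxj => by rw [givens_row_j hij, if_neg hxi, if_neg hxj]; ring)]
      by_cases hli : l = i
      · subst hli
        simp [givens_row_j hij, givens_row_i hij, hij, hij.symm]
        ring
      · by_cases hlj : l = k
        · subst hlj
          simp [givens_row_j hij, hij, hij.symm]
          linear_combination hcs
        · simp [givens_row_j hij, givens_row hli hlj, hij, hij.symm, Ne.symm hlj, hlj, Ne.symm hli, hli]
    · simp only [givens_row hki hkj, ite_mul, one_mul, zero_mul]
      rw [Finset.sum_ite_eq' Finset.univ k (fun x => givens n i j c s l x)]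
      simp only [Finset.mem_univ, if_true]
      by_cases hli : l = i
      · rw [hli, givens_row_i hij, if_neg hki, if_neg hkj, if_neg hki]
      · by_cases hlj : l = j
        · rw [hlj, givens_row_j hij, if_neg hki, if_neg hkj, if_neg hkj]
        · rw [givens_row hli hlj]
end helpers

theorem jacobi_offdiag_decrease (n : ℕ) (A : Matrix (Fin n) (Fin n) ℝ)
    (hA : Aᵀ = A) (i j : Fin n) (hij : i ≠ j)
    (c s : ℝ) (hcs : c ^ 2 + s ^ 2 = 1)
    (A' : Matrix (Fin n) (Fin n) ℝ)
    (hA' : A' = (givens n i j c s)ᵀ * A * givens n i j c s)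
    (hzero : A' i j = 0) :
    offSq A' = offSq A - 2 * (A i j) ^ 2 := by
  have hsym : A j i = A i j := by
    have h := congrFun (congrFun hA i) j
    rw [Matrix.transpose_apply] at h
    exact h
  -- entry formula
  have hA'entry : ∀ k l, A' k l =
      ∑ q, (∑ p, givens n i j c s p k * A p q) * givens n i j c s q l := by
    intro k l
    rw [hA']
    simp only [Matrix.mul_apply, Matrix.transpose_apply]
  have hcolsum_i : ∀ q, (∑ p, givens n i j c s p i * A p q) = c * A i q - s * A j q := by
    intro q
    rw [sum_two hij _ (fun x hxi hxj => by rw [givens_col_i hij, if_neg hxi, if_neg hxj]; ring)]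
    simp [givens_col_i hij, hij, hij.symm, Ne.symm hij]
    ring
  have hcolsum_j : ∀ q, (∑ p, givens n i j c s p j * A p q) = s * A i q + c * A j q := by
    intro q
    rw [sum_two hij _ (fun x hxi hxj => by rw [givens_col_j hij, if_neg hxi, if_neg hxj]; ring)]
    simp [givens_col_j hij, hij, hij.symm, Ne.symm hij]
  have hcolsum : ∀ (k : Fin n), k ≠ i → k ≠ j → ∀ q,
      (∑ p, givens n i j c s p k * A p q) = A k q := by
    intro k hki hkj q
    simp [givens_col hki hkj, ite_mul, one_mul, zero_mul, Finset.sum_ite_eq']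
  have hdiag : ∀ (k : Fin n), k ≠ i → k ≠ j → A' k k = A k k := by
    intro k hki hkj
    rw [hA'entry]
    simp only [hcolsum k hki hkj]
    simp [givens_col hki hkj, mul_ite, mul_one, mul_zero, Finset.sum_ite_eq']
  have hii : A' i i = (c * A i i - s * A j i) * c + (c * A i j - s * A j j) * (-s) := by
    rw [hA'entry,
      sum_two hij _ (fun x hxi hxj => by rw [givens_col_i hij, if_neg hxi, if_neg hxj]; ring)]
    simp only [hcolsum_i]
    simp [givens_col_i hij, hij, hij.symm, Ne.symm hij]
  have hjj : A' j j = (s * A i i + c * A j i) * s + (s * A i j + c * A j j) * c := by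
    rw [hA'entry,
      sum_two hij _ (fun x hxi hxj => by rw [givens_col_j hij, if_neg hxi, if_neg hxj]; ring)]
    simp only [hcolsum_j]
    simp [givens_col_j hij, hij, hij.symm, Ne.symm hij]
  have hij' : (c * A i i - s * A j i) * s + (c * A i j - s * A j j) * c = 0 := by
    rw [← hzero, hA'entry,
      sum_two hij _ (fun x hxi hxj => by rw [givens_col_j hij, if_neg hxi, if_neg hxj]; ring)]
    simp only [hcolsum_i]
    simp [givens_col_j hij, hij, hij.symm, Ne.symm hij]
  have hkey : A' i i ^ 2 + A' j j ^ 2 = A i i ^ 2 + A j j ^ 2 + 2 * A i j ^ 2 := by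
    rw [hii, hjj, hsym] at *
    linear_combination ((c ^ 2 + s ^ 2 + 1) * (A i i ^ 2 + A j j ^ 2 + 2 * A i j ^ 2)) * hcs
      - (2 * ((c * A i i - s * A i j) * s + (c * A i j - s * A j j) * c)) * hij'
  -- diagonal sums
  have hsplit : ∀ M : Matrix (Fin n) (Fin n) ℝ, ∑ k, M k k ^ 2 =
      M i i ^ 2 + M j j ^ 2 + ∑ k ∈ (Finset.univ.erase i).erase j, M k k ^ 2 := by
    intro M
    rw [← Finset.add_sum_erase _ _ (Finset.mem_univ i),
      ← Finset.add_sum_erase _ (fun k => M k k ^ 2)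
        (Finset.mem_erase.mpr ⟨hij.symm, Finset.mem_univ j⟩)]
    ring
  have hD : ∑ k, A' k k ^ 2 = (∑ k, A k k ^ 2) + 2 * A i j ^ 2 := by
    have hrest : ∑ k ∈ (Finset.univ.erase i).erase j, A' k k ^ 2 =
        ∑ k ∈ (Finset.univ.erase i).erase j, A k k ^ 2 := by
      refine Finset.sum_congr rfl fun k hk => ?_
      rw [Finset.mem_erase, Finset.mem_erase] at hk
      rw [hdiag k hk.2.1 hk.1]
    rw [hsplit A', hsplit A, hrest, hkey]
    ring
  -- Frobenius invariance
  have hGGt := givens_mul_transpose hij hcs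
  have htr : ∀ M : Matrix (Fin n) (Fin n) ℝ,
      ∑ k, ∑ l, M k l ^ 2 = Matrix.trace (Mᵀ * M) := by
    intro M
    rw [Finset.sum_comm]
    simp [Matrix.trace, Matrix.mul_apply, Matrix.diag, sq]
  have hmid : ∀ X : Matrix (Fin n) (Fin n) ℝ, givens n i j c s * ((givens n i j c s)ᵀ * X) = X := by
    intro X
    rw [← Matrix.mul_assoc, hGGt, Matrix.one_mul]
  have hF : ∑ k, ∑ l, A' k l ^ 2 = ∑ k, ∑ l, A k l ^ 2 := by
    rw [htr, htr, hA']
    rw [Matrix.transpose_mul, Matrix.transpose_mul, Matrix.transpose_transpose]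
    simp only [Matrix.mul_assoc]
    rw [hmid]
    rw [Matrix.trace_mul_comm, ← Matrix.mul_assoc, Matrix.mul_assoc, hGGt, Matrix.mul_one]
  have hoff : ∀ M : Matrix (Fin n) (Fin n) ℝ,
      offSq M = (∑ k, ∑ l, M k l ^ 2) - ∑ k, M k k ^ 2 := by
    intro M
    unfold offSq
    rw [← Finset.sum_sub_distrib]
    refine Finset.sum_congr rfl fun k _ => ?_
    have h1 : ∀ l, (if k ≠ l then M k l ^ 2 else 0) =
        M k l ^ 2 - (if k = l then M k l ^ 2 else 0) := by
      intro l; by_cases h : k = l <;> simp [h]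
    rw [Finset.sum_congr rfl fun l _ => h1 l, Finset.sum_sub_distrib, Finset.sum_ite_eq]
    simp
  rw [hoff, hoff, hF, hD]
  ring
end

section
/- Let A be a symmetric n×n real matrix with n ≥ 2, let (i,j) with i ≠ j be a pair maximizing |A k l| over all off-diagonal pairs, and let c, s with c² + s² = 1 be chosen so that A' = Gᵗ · A · G satisfies A' i j = 0, where G = G^{(i,j)}(c,s). Then one step of the max-element Jacobi method contracts the off-diagonal norm: off(A')² ≤ (1 − 2/(n·(n−1))) · off(A)². -/
open Matrix

section aux
variable {n : ℕ} {i j : Fin n} {c s : ℝ}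

lemma mul_givens_apply (hij : i ≠ j) (M : Matrix (Fin n) (Fin n) ℝ) (k l : Fin n) :
    (M * givens n i j c s) k l =
      if l = i then c * M k i - s * M k j
      else if l = j then s * M k i + c * M k j
      else M k l := by
  rw [Matrix.mul_apply]
  by_cases hl : l = i
  · rw [Fintype.sum_eq_add i j hij (fun p hp => by
      simp [givens, hp.1, hp.2, hl])]
    simp [givens, hij, hij.symm, hl]
    ring
  · by_cases hl2 : l = j
    · rw [Fintype.sum_eq_add i j hij (fun p hp => by
        simp [givens, hp.1, hp.2, hl2, hij.symm])]
      simp [givens, hij, hij.symm, hl, hl2]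
      ring
    · rw [Fintype.sum_eq_single l (fun p hp => by
        simp [givens, hl, hl2, hp, Ne.symm hl, Ne.symm hl2])]
      simp [givens, hl, hl2]

lemma givensT_mul_apply (hij : i ≠ j) (M : Matrix (Fin n) (Fin n) ℝ) (k l : Fin n) :
    ((givens n i j c s)ᵀ * M) k l =
      if k = i then c * M i l - s * M j l
      else if k = j then s * M i l + c * M j l
      else M k l := by
  rw [Matrix.mul_apply]
  simp only [Matrix.transpose_apply]
  by_cases hk : k = i
  · rw [Fintype.sum_eq_add i j hij (fun p hp => by
      simp [givens, hp.1, hp.2, hk])]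
    simp [givens, hij, hij.symm, hk]
    ring
  · by_cases hk2 : k = j
    · rw [Fintype.sum_eq_add i j hij (fun p hp => by
        simp [givens, hp.1, hp.2, hk2, hij.symm])]
      simp [givens, hij, hij.symm, hk, hk2]
      try ring
    · rw [Fintype.sum_eq_single k (fun p hp => by
        simp [givens, hk, hk2, hp, Ne.symm hk, Ne.symm hk2])]
      simp [givens, hk, hk2]

lemma givensT_mul_givens (hij : i ≠ j) (hcs : c ^ 2 + s ^ 2 = 1) :
    (givens n i j c s)ᵀ * givens n i j c s = 1 := by
  ext k l
  rw [givensT_mul_apply hij]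
  by_cases hk : k = i
  · by_cases hl : l = i
    · rw [if_pos hk]
      simp [givens, hij, hij.symm, Matrix.one_apply, hk, hl]
      nlinarith [hcs]
    · by_cases hl2 : l = j
      · rw [if_pos hk]
        simp [givens, hij, hij.symm, Matrix.one_apply, hk, hl2, hl,
          show ¬ i = l from fun h => hl h.symm]
        ring
      · rw [if_pos hk]
        simp [givens, hij, hij.symm, Matrix.one_apply, hk, hl, hl2,
          Ne.symm hl, Ne.symm hl2, show ¬ k = l from by rw [hk]; exact fun h => hl h.symm]
  · by_cases hk2 : k = j
    · by_cases hl : l = i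
      · rw [if_neg hk, if_pos hk2]
        simp [givens, hij, hij.symm, Matrix.one_apply, hk2, hl,
          show ¬ k = l from by rw [hk2, hl]; exact hij.symm]
        ring
      · by_cases hl2 : l = j
        · rw [if_neg hk, if_pos hk2]
          simp [givens, hij, hij.symm, Matrix.one_apply, hk2, hl2]
          nlinarith [hcs]
        · rw [if_neg hk, if_pos hk2]
          simp [givens, hij, hij.symm, Matrix.one_apply, hk2, hl, hl2,
            Ne.symm hl, Ne.symm hl2, show ¬ k = l from by rw [hk2]; exact fun h => hl2 h.symm]
    · rw [if_neg hk, if_neg hk2]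
      simp [givens, hk, hk2, Matrix.one_apply]

/-- Sum of all squared entries. -/
def sqSum {n : ℕ} (M : Matrix (Fin n) (Fin n) ℝ) : ℝ :=
  ∑ k : Fin n, ∑ l : Fin n, (M k l) ^ 2

lemma sqSum_eq_trace (M : Matrix (Fin n) (Fin n) ℝ) :
    sqSum M = Matrix.trace (Mᵀ * M) := by
  simp only [sqSum, Matrix.trace, Matrix.diag, Matrix.mul_apply, Matrix.transpose_apply, sq]
  exact Finset.sum_comm

lemma offSq_eq (M : Matrix (Fin n) (Fin n) ℝ) :
    offSq M = sqSum M - ∑ k : Fin n, (M k k) ^ 2 := by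
  rw [offSq, sqSum, ← Finset.sum_sub_distrib]
  refine Finset.sum_congr rfl fun k _ => ?_
  have : ∀ l : Fin n, (if k ≠ l then (M k l) ^ 2 else 0)
      = (M k l) ^ 2 - (if l = k then (M k k) ^ 2 else 0) := by
    intro l
    by_cases h : k = l
    · subst h; simp
    · simp [h, Ne.symm h]
  rw [Finset.sum_congr rfl (fun l _ => this l), Finset.sum_sub_distrib,
    Finset.sum_ite_eq' Finset.univ k (fun _ => (M k k) ^ 2)]
  simp

end aux

theorem max_element_jacobi_contraction (n : ℕ) (hn : 2 ≤ n)
    (A : Matrix (Fin n) (Fin n) ℝ) (hA : Aᵀ = A)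
    (i j : Fin n) (hij : i ≠ j)
    (hmax : ∀ k l : Fin n, k ≠ l → |A k l| ≤ |A i j|)
    (c s : ℝ) (hcs : c ^ 2 + s ^ 2 = 1)
    (A' : Matrix (Fin n) (Fin n) ℝ)
    (hA' : A' = (givens n i j c s)ᵀ * A * givens n i j c s)
    (hzero : A' i j = 0) :
    offSq A' ≤ (1 - 2 / ((n : ℝ) * ((n : ℝ) - 1))) * offSq A := by
  set G := givens n i j c s with hG
  have hGtG : Gᵀ * G = 1 := givensT_mul_givens hij hcs
  have hGGt : G * Gᵀ = 1 := mul_eq_one_comm.mp hGtG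
  have hsym : A j i = A i j := by
    conv_lhs => rw [show A j i = Aᵀ i j from rfl, hA]
  set a := A i i with ha
  set b := A i j with hb
  set d := A j j with hd
  -- entries of A'
  have hB : ∀ k l, ((Gᵀ * A) * G) k l =
      if l = i then c * (Gᵀ * A) k i - s * (Gᵀ * A) k j
      else if l = j then s * (Gᵀ * A) k i + c * (Gᵀ * A) k j
      else (Gᵀ * A) k l := fun k l => mul_givens_apply hij _ k l
  have hBe : ∀ k l, (Gᵀ * A) k l =
      if k = i then c * A i l - s * A j l
      else if k = j then s * A i l + c * A j l
      else A k l := fun k l => givensT_mul_apply hij A k l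
  have hA'e : ∀ k l, A' k l =
      if l = i then c * (Gᵀ * A) k i - s * (Gᵀ * A) k j
      else if l = j then s * (Gᵀ * A) k i + c * (Gᵀ * A) k j
      else (Gᵀ * A) k l := by
    intro k l; rw [hA']; exact hB k l
  have hz : s * (c * a - s * b) + c * (c * b - s * d) = 0 := by
    have := hzero
    rw [hA'e i j] at this
    simp only [hij, if_neg, if_pos rfl, hBe, hsym] at this
    simpa [Ne.symm hij, hij] using this
  have haii : A' i i = c * (c * a - s * b) - s * (c * b - s * d) := by
    rw [hA'e i i]; simp [hBe, hsym, hij]; rfl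
  have hajj : A' j j = s * (s * a + c * b) + c * (s * b + c * d) := by
    rw [hA'e j j]; simp [hBe, hsym, hij, Ne.symm hij]; rfl
  have hakk : ∀ k, k ≠ i → k ≠ j → A' k k = A k k := by
    intro k hki hkj
    rw [hA'e k k]; simp [hBe, hki, hkj]
  -- total square sum invariant
  have hST : sqSum A' = sqSum A := by
    have hA's : A'ᵀ = A' := by
      rw [hA']
      simp [Matrix.transpose_mul, hA, Matrix.mul_assoc]
    rw [sqSum_eq_trace, sqSum_eq_trace, hA's, hA']
    have key : (Gᵀ * A * G) * (Gᵀ * A * G) = Gᵀ * (A * A * G) := by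
      calc (Gᵀ * A * G) * (Gᵀ * A * G) = Gᵀ * (A * ((G * Gᵀ) * (A * G))) := by
            simp only [Matrix.mul_assoc]
        _ = Gᵀ * (A * A * G) := by rw [hGGt, Matrix.one_mul]; simp only [Matrix.mul_assoc]
    rw [key, Matrix.trace_mul_comm, Matrix.mul_assoc (A * A), hGGt, Matrix.mul_one, hA]
  -- diagonal changes
  have hdiag : (∑ k : Fin n, (A' k k) ^ 2) = (∑ k : Fin n, (A k k) ^ 2) + 2 * b ^ 2 := by
    have key : (∑ k : Fin n, ((A' k k) ^ 2 - (A k k) ^ 2)) = 2 * b ^ 2 := by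
      rw [Fintype.sum_eq_add i j hij (fun p hp => by rw [hakk p hp.1 hp.2]; ring)]
      rw [haii, hajj]
      have hsq : (c * (c * a - s * b) - s * (c * b - s * d)) ^ 2
          + (s * (s * a + c * b) + c * (s * b + c * d)) ^ 2
          = a ^ 2 + d ^ 2 + 2 * b ^ 2 := by
        linear_combination ((c^2+s^2+1)*(a^2+d^2+2*b^2)) * hcs
          - 2*(c*(s*a+c*b) - s*(s*b+c*d)) * hz
      linarith [hsq]
    rw [Finset.sum_sub_distrib] at key
    linarith [key]
  have hoff : offSq A' = offSq A - 2 * b ^ 2 := by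
    rw [offSq_eq, offSq_eq, hST, hdiag]; ring
  -- bound offSq A
  have hN : (0:ℝ) < (n : ℝ) * ((n : ℝ) - 1) := by
    have : (2:ℝ) ≤ (n:ℝ) := by exact_mod_cast hn
    nlinarith
  have hbound : offSq A ≤ (n : ℝ) * ((n : ℝ) - 1) * b ^ 2 := by
    have step : ∀ k : Fin n, (∑ l : Fin n, if k ≠ l then (A k l) ^ 2 else 0)
        ≤ ((n : ℝ) - 1) * b ^ 2 := by
      intro k
      have h1 : (∑ l : Fin n, if k ≠ l then (A k l) ^ 2 else 0)
          ≤ ∑ l : Fin n, (if k ≠ l then b ^ 2 else 0) := by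
        refine Finset.sum_le_sum fun l _ => ?_
        by_cases h : k = l
        · simp [h]
        · simp only [h, ne_eq, not_false_iff, if_true]
          calc (A k l) ^ 2 = |A k l| ^ 2 := (sq_abs _).symm
            _ ≤ |b| ^ 2 := by
                have := hmax k l h
                exact pow_le_pow_left₀ (abs_nonneg _) this 2
            _ = b ^ 2 := sq_abs b
      have h2 : (∑ l : Fin n, (if k ≠ l then b ^ 2 else 0))
          = ((n : ℝ) - 1) * b ^ 2 := by
        have : ∀ l : Fin n, (if k ≠ l then b ^ 2 else 0)
            = b ^ 2 - (if l = k then b ^ 2 else 0) := by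
          intro l; by_cases h : k = l
          · subst h; simp
          · simp [h, Ne.symm h]
        rw [Finset.sum_congr rfl (fun l _ => this l), Finset.sum_sub_distrib,
          Finset.sum_ite_eq' Finset.univ k (fun _ => b ^ 2)]
        simp [Finset.card_univ]
        ring
      linarith [h1, h2.le, h2.ge]
    calc offSq A = ∑ k : Fin n, ∑ l : Fin n, (if k ≠ l then (A k l) ^ 2 else 0) := rfl
      _ ≤ ∑ _k : Fin n, ((n : ℝ) - 1) * b ^ 2 := Finset.sum_le_sum fun k _ => step k
      _ = (n : ℝ) * (((n : ℝ) - 1) * b ^ 2) := by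
          simp [Finset.card_univ]
      _ = (n : ℝ) * ((n : ℝ) - 1) * b ^ 2 := by ring
  rw [hoff]
  have h2N : 2 / ((n : ℝ) * ((n : ℝ) - 1)) * offSq A ≤ 2 * b ^ 2 := by
    rw [div_mul_eq_mul_div, div_le_iff₀ hN]
    nlinarith [hbound]
  nlinarith [h2N]
end

section
/- Let n ≥ 2 and let (A_k) be a sequence of symmetric n×n real matrices such that for each k, A_{k+1} = G_kᵗ · A_k · G_k where G_k is a Givens rotation G^{(i_k,j_k)}(c_k,s_k) with (i_k,j_k) a maximal-magnitude off-diagonal pair of A_k and with (A_{k+1}) (i_k) (j_k) = 0. Then off(A_k)² ≤ (1 − 2/(n·(n−1)))^k · off(A_0)² for every k; in particular off(A_k)² tends to 0 as k → ∞, i.e., the max-element Jacobi iteration converges to a diagonal matrix. -/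
open Matrix

namespace JacobiAux

variable {n : ℕ}

lemma sum_two (i j : Fin n) (h : i ≠ j) (f : Fin n → ℝ) (a b : ℝ)
    (hf : ∀ p, f p = if p = i then a else if p = j then b else 0) :
    ∑ p, f p = a + b := by
  have h2 : ∀ p, f p = (if p = i then a else 0) + (if p = j then b else 0) := by
    intro p
    rw [hf]
    by_cases hpi : p = i
    · simp [hpi, h]
    · by_cases hpj : p = j
      · simp [hpi, hpj, Ne.symm h]
      · simp [hpi, hpj]
  simp only [h2, Finset.sum_add_distrib, Finset.sum_ite_eq', Finset.mem_univ, if_true]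

lemma givens_col_i (i j : Fin n) (h : i ≠ j) (c s : ℝ) (p : Fin n) :
    givens n i j c s p i = if p = i then c else if p = j then -s else 0 := by
  by_cases hpi : p = i
  · simp [givens, hpi]
  · by_cases hpj : p = j
    · simp [givens, hpi, hpj, h, Ne.symm h]
    · simp [givens, hpi, hpj]

lemma givens_col_j (i j : Fin n) (h : i ≠ j) (c s : ℝ) (p : Fin n) :
    givens n i j c s p j = if p = i then s else if p = j then c else 0 := by
  by_cases hpi : p = i
  · simp [givens, hpi, h, Ne.symm h]
  · by_cases hpj : p = j
    · simp [givens, hpi, hpj, h, Ne.symm h]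
    · simp [givens, hpi, hpj]

lemma givens_col_other (i j : Fin n) (c s : ℝ) (k : Fin n) (hki : k ≠ i) (hkj : k ≠ j)
    (p : Fin n) : givens n i j c s p k = if p = k then 1 else 0 := by
  by_cases hpk : p = k <;> simp [givens, hpk, hki, hkj]

lemma mulG_col_i (i j : Fin n) (h : i ≠ j) (c s : ℝ) (M : Matrix (Fin n) (Fin n) ℝ)
    (r : Fin n) : (M * givens n i j c s) r i = c * M r i - s * M r j := by
  rw [mul_apply]
  have := sum_two i j h (fun q => M r q * givens n i j c s q i) (M r i * c) (M r j * (-s))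
    (fun q => by
      show M r q * givens n i j c s q i = _
      rw [givens_col_i i j h]
      split_ifs
      all_goals simp_all)
  rw [this]; try ring

lemma mulG_col_j (i j : Fin n) (h : i ≠ j) (c s : ℝ) (M : Matrix (Fin n) (Fin n) ℝ)
    (r : Fin n) : (M * givens n i j c s) r j = s * M r i + c * M r j := by
  rw [mul_apply]
  have := sum_two i j h (fun q => M r q * givens n i j c s q j) (M r i * s) (M r j * c)
    (fun q => by
      show M r q * givens n i j c s q j = _
      rw [givens_col_j i j h]
      split_ifs
      all_goals simp_all)
  rw [this]; try ring

lemma mulG_col_other (i j : Fin n) (c s : ℝ) (M : Matrix (Fin n) (Fin n) ℝ)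
    (r k : Fin n) (hki : k ≠ i) (hkj : k ≠ j) :
    (M * givens n i j c s) r k = M r k := by
  rw [mul_apply]
  simp [givens_col_other i j c s k hki hkj, mul_ite]

lemma Gt_mul_row_i (i j : Fin n) (h : i ≠ j) (c s : ℝ) (M : Matrix (Fin n) (Fin n) ℝ)
    (l : Fin n) : ((givens n i j c s)ᵀ * M) i l = c * M i l - s * M j l := by
  rw [mul_apply]
  have := sum_two i j h (fun p => (givens n i j c s)ᵀ i p * M p l) (c * M i l) (-s * M j l)
    (fun p => by
      show (givens n i j c s)ᵀ i p * M p l = _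
      rw [transpose_apply, givens_col_i i j h]
      split_ifs
      all_goals simp_all)
  rw [this]; try ring

lemma Gt_mul_row_j (i j : Fin n) (h : i ≠ j) (c s : ℝ) (M : Matrix (Fin n) (Fin n) ℝ)
    (l : Fin n) : ((givens n i j c s)ᵀ * M) j l = s * M i l + c * M j l := by
  rw [mul_apply]
  have := sum_two i j h (fun p => (givens n i j c s)ᵀ j p * M p l) (s * M i l) (c * M j l)
    (fun p => by
      show (givens n i j c s)ᵀ j p * M p l = _
      rw [transpose_apply, givens_col_j i j h]
      split_ifs
      all_goals simp_all)
  rw [this]; try ring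

lemma Gt_mul_row_other (i j : Fin n) (c s : ℝ) (M : Matrix (Fin n) (Fin n) ℝ)
    (k l : Fin n) (hki : k ≠ i) (hkj : k ≠ j) :
    ((givens n i j c s)ᵀ * M) k l = M k l := by
  rw [mul_apply]
  simp [transpose_apply, givens_col_other i j c s k hki hkj, ite_mul]

lemma givens_orth (i j : Fin n) (h : i ≠ j) (c s : ℝ) (hcs : c ^ 2 + s ^ 2 = 1) :
    (givens n i j c s)ᵀ * givens n i j c s = 1 := by
  ext k l
  by_cases hki : k = i
  · rw [hki, Gt_mul_row_i i j h]
    by_cases hli : l = i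
    · rw [hli, givens_col_i i j h, givens_col_i i j h]
      simp [h, Ne.symm h, one_apply]
      linear_combination hcs
    · by_cases hlj : l = j
      · rw [hlj, givens_col_j i j h, givens_col_j i j h]
        simp [h, Ne.symm h, one_apply]
        ring
      · rw [givens_col_other i j c s l hli hlj, givens_col_other i j c s l hli hlj]
        simp [one_apply, Ne.symm hli, Ne.symm hlj, hli, hlj]
  · by_cases hkj : k = j
    · rw [hkj, Gt_mul_row_j i j h]
      by_cases hli : l = i
      · rw [hli, givens_col_i i j h, givens_col_i i j h]
        simp [h, Ne.symm h, one_apply]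
        ring
      · by_cases hlj : l = j
        · rw [hlj, givens_col_j i j h, givens_col_j i j h]
          simp [h, Ne.symm h, one_apply]
          linear_combination hcs
        · rw [givens_col_other i j c s l hli hlj, givens_col_other i j c s l hli hlj]
          simp [one_apply, hli, hlj, Ne.symm hli, Ne.symm hlj]
    · rw [Gt_mul_row_other i j c s _ k l hki hkj]
      simp [givens, one_apply, hki, hkj]

/-- Squared Frobenius norm. -/
def frobSq (M : Matrix (Fin n) (Fin n) ℝ) : ℝ := ∑ k : Fin n, ∑ l : Fin n, (M k l) ^ 2

lemma frobSq_eq_trace (M : Matrix (Fin n) (Fin n) ℝ) : frobSq M = trace (Mᵀ * M) := by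
  rw [trace]
  simp only [diag_apply, mul_apply, transpose_apply, frobSq, pow_two]
  rw [Finset.sum_comm]

lemma frobSq_conj (i j : Fin n) (h : i ≠ j) (c s : ℝ) (hcs : c ^ 2 + s ^ 2 = 1)
    (M : Matrix (Fin n) (Fin n) ℝ) :
    frobSq ((givens n i j c s)ᵀ * M * givens n i j c s) = frobSq M := by
  have hGtG : (givens n i j c s)ᵀ * givens n i j c s = 1 := givens_orth i j h c s hcs
  have hGGt : givens n i j c s * (givens n i j c s)ᵀ = 1 := mul_eq_one_comm.mp hGtG
  have hcontract : ∀ X : Matrix (Fin n) (Fin n) ℝ,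
      givens n i j c s * ((givens n i j c s)ᵀ * X) = X := fun X => by
    rw [← Matrix.mul_assoc, hGGt, Matrix.one_mul]
  have key : ((givens n i j c s)ᵀ * M * givens n i j c s)ᵀ
        * ((givens n i j c s)ᵀ * M * givens n i j c s)
      = (givens n i j c s)ᵀ * (Mᵀ * M) * givens n i j c s := by
    simp only [transpose_mul, transpose_transpose, Matrix.mul_assoc, hcontract]
  rw [frobSq_eq_trace, frobSq_eq_trace, key, Matrix.trace_mul_cycle,
    ← Matrix.mul_assoc, hGGt, Matrix.one_mul]

lemma offSq_eq (M : Matrix (Fin n) (Fin n) ℝ) :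
    offSq M = frobSq M - ∑ k : Fin n, (M k k) ^ 2 := by
  rw [offSq, frobSq, ← Finset.sum_sub_distrib]
  apply Finset.sum_congr rfl
  intro k _
  have h1 : ∀ l : Fin n, (if k ≠ l then (M k l) ^ 2 else 0)
      = (M k l) ^ 2 - (if l = k then (M k k) ^ 2 else 0) := by
    intro l
    by_cases hkl : k = l
    · simp [hkl]
    · simp [hkl, Ne.symm hkl]
  calc ∑ l : Fin n, (if k ≠ l then (M k l) ^ 2 else 0)
      = ∑ l : Fin n, ((M k l) ^ 2 - (if l = k then (M k k) ^ 2 else 0)) :=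
        Finset.sum_congr rfl fun l _ => h1 l
    _ = (∑ l : Fin n, (M k l) ^ 2) - (M k k) ^ 2 := by
        rw [Finset.sum_sub_distrib]
        simp

lemma sum_sq_two_identity (c s a b d : ℝ) (hcs : c ^ 2 + s ^ 2 = 1) :
    (c ^ 2 * a - 2 * c * s * b + s ^ 2 * d) ^ 2
      + (s ^ 2 * a + 2 * c * s * b + c ^ 2 * d) ^ 2
      + 2 * (c * s * (a - d) + (c ^ 2 - s ^ 2) * b) ^ 2
      = a ^ 2 + d ^ 2 + 2 * b ^ 2 := by
  linear_combination ((a ^ 2 + 2 * b ^ 2 + d ^ 2) * (c ^ 2 + s ^ 2 + 1)) * hcs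

/-- The key one-step identity. -/
lemma offSq_step (i j : Fin n) (h : i ≠ j) (c s : ℝ) (hcs : c ^ 2 + s ^ 2 = 1)
    (M : Matrix (Fin n) (Fin n) ℝ) (hM : Mᵀ = M)
    (hzero : ((givens n i j c s)ᵀ * M * givens n i j c s) i j = 0) :
    offSq ((givens n i j c s)ᵀ * M * givens n i j c s)
      = offSq M - 2 * (M i j) ^ 2 := by
  have hsym : M j i = M i j := (congrFun (congrFun hM j) i).symm
  have hii : ((givens n i j c s)ᵀ * M * givens n i j c s) i i
      = c ^ 2 * M i i - 2 * c * s * M i j + s ^ 2 * M j j := by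
    rw [mulG_col_i i j h, Gt_mul_row_i i j h, Gt_mul_row_i i j h, hsym]
    ring
  have hjj : ((givens n i j c s)ᵀ * M * givens n i j c s) j j
      = s ^ 2 * M i i + 2 * c * s * M i j + c ^ 2 * M j j := by
    rw [mulG_col_j i j h, Gt_mul_row_j i j h, Gt_mul_row_j i j h, hsym]
    ring
  have hij : ((givens n i j c s)ᵀ * M * givens n i j c s) i j
      = c * s * (M i i - M j j) + (c ^ 2 - s ^ 2) * M i j := by
    rw [mulG_col_j i j h, Gt_mul_row_i i j h, Gt_mul_row_i i j h, hsym]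
    ring
  have hother : ∀ k : Fin n, k ≠ i → k ≠ j →
      ((givens n i j c s)ᵀ * M * givens n i j c s) k k = M k k := by
    intro k hki hkj
    rw [mulG_col_other i j c s _ k k hki hkj, Gt_mul_row_other i j c s M k k hki hkj]
  have hz : c * s * (M i i - M j j) + (c ^ 2 - s ^ 2) * M i j = 0 := by
    rw [← hij]; exact hzero
  have hid := sum_sq_two_identity c s (M i i) (M i j) (M j j) hcs
  rw [hz] at hid
  have hdiag : ∑ k : Fin n, (((givens n i j c s)ᵀ * M * givens n i j c s) k k) ^ 2
      = (∑ k : Fin n, (M k k) ^ 2) + 2 * (M i j) ^ 2 := by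
    have key : ∑ k : Fin n, ((((givens n i j c s)ᵀ * M * givens n i j c s) k k) ^ 2
        - (M k k) ^ 2) = 2 * (M i j) ^ 2 := by
      rw [sum_two i j h _
        ((((givens n i j c s)ᵀ * M * givens n i j c s) i i) ^ 2 - (M i i) ^ 2)
        ((((givens n i j c s)ᵀ * M * givens n i j c s) j j) ^ 2 - (M j j) ^ 2)]
      · rw [hii, hjj]
        nlinarith [hid]
      · intro p
        by_cases hpi : p = i
        · simp [hpi]
        · by_cases hpj : p = j
          · simp [hpi, hpj, Ne.symm h]
          · simp [hpi, hpj, hother p hpi hpj]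
    rw [Finset.sum_sub_distrib] at key
    linarith
  rw [offSq_eq, offSq_eq, hdiag, frobSq_conj i j h c s hcs]
  ring

/-- Count bound: offSq M ≤ n(n-1) * (max off-diag entry)². -/
lemma offSq_le (i j : Fin n) (h : i ≠ j)
    (M : Matrix (Fin n) (Fin n) ℝ)
    (hmax : ∀ p q : Fin n, p ≠ q → |M p q| ≤ |M i j|) :
    offSq M ≤ (n : ℝ) * ((n : ℝ) - 1) * (M i j) ^ 2 := by
  have hbound : ∀ k l : Fin n, (if k ≠ l then (M k l) ^ 2 else 0)
      ≤ (if k ≠ l then (M i j) ^ 2 else 0) := by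
    intro k l
    rcases eq_or_ne k l with rfl | hkl
    · simp
    · rw [if_pos hkl, if_pos hkl]
      have := hmax k l hkl
      calc (M k l) ^ 2 = |M k l| ^ 2 := (sq_abs _).symm
        _ ≤ |M i j| ^ 2 := by nlinarith [abs_nonneg (M k l), abs_nonneg (M i j)]
        _ = (M i j) ^ 2 := sq_abs _
  have h1 : offSq M ≤ ∑ k : Fin n, ∑ l : Fin n, (if k ≠ l then (M i j) ^ 2 else 0) := by
    apply Finset.sum_le_sum
    intro k _
    exact Finset.sum_le_sum fun l _ => hbound k l
  have h2 : ∑ k : Fin n, ∑ l : Fin n, (if k ≠ l then (M i j) ^ 2 else 0)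
      = (n : ℝ) * ((n : ℝ) - 1) * (M i j) ^ 2 := by
    have hinner : ∀ k : Fin n, ∑ l : Fin n, (if k ≠ l then (M i j) ^ 2 else 0)
        = ((n : ℝ) - 1) * (M i j) ^ 2 := by
      intro k
      have : ∀ l : Fin n, (if k ≠ l then (M i j) ^ 2 else 0)
          = (M i j) ^ 2 - (if l = k then (M i j) ^ 2 else 0) := by
        intro l
        rcases eq_or_ne k l with rfl | hkl
        · simp
        · simp [hkl, Ne.symm hkl]
      simp only [this, Finset.sum_sub_distrib, Finset.sum_const, Finset.card_univ,
        Fintype.card_fin, nsmul_eq_mul, Finset.sum_ite_eq', Finset.mem_univ, if_true]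
      ring
    simp only [hinner, Finset.sum_const, Finset.card_univ, Fintype.card_fin, nsmul_eq_mul]
    ring
  exact h1.trans_eq h2

lemma offSq_nonneg (M : Matrix (Fin n) (Fin n) ℝ) : 0 ≤ offSq M := by
  apply Finset.sum_nonneg
  intro k _
  apply Finset.sum_nonneg
  intro l _
  positivity

end JacobiAux

open JacobiAux in
theorem max_element_jacobi_convergence (n : ℕ) (hn : 2 ≤ n)
    (A : ℕ → Matrix (Fin n) (Fin n) ℝ)
    (hsymm : ∀ k, (A k)ᵀ = A k)
    (hstep : ∀ k, ∃ (i j : Fin n) (c s : ℝ), i ≠ j ∧ c ^ 2 + s ^ 2 = 1 ∧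
        (∀ p q : Fin n, p ≠ q → |A k p q| ≤ |A k i j|) ∧
        A (k + 1) = (givens n i j c s)ᵀ * A k * givens n i j c s ∧
        A (k + 1) i j = 0) :
    (∀ k : ℕ, offSq (A k) ≤ (1 - 2 / ((n : ℝ) * ((n : ℝ) - 1))) ^ k * offSq (A 0)) ∧
    Filter.Tendsto (fun k => offSq (A k)) Filter.atTop (nhds 0) := by
  set q : ℝ := 1 - 2 / ((n : ℝ) * ((n : ℝ) - 1)) with hq
  have hn2 : (2 : ℝ) ≤ (n : ℝ) := by exact_mod_cast hn
  have hD : (2 : ℝ) ≤ (n : ℝ) * ((n : ℝ) - 1) := by nlinarith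
  have hDpos : (0 : ℝ) < (n : ℝ) * ((n : ℝ) - 1) := by linarith
  have hq0 : 0 ≤ q := by
    rw [hq]
    have : 2 / ((n : ℝ) * ((n : ℝ) - 1)) ≤ 1 := by
      rw [div_le_one hDpos]; linarith
    linarith
  have hq1 : q < 1 := by
    rw [hq]
    have : 0 < 2 / ((n : ℝ) * ((n : ℝ) - 1)) := by positivity
    linarith
  -- one-step inequality
  have step : ∀ k, offSq (A (k + 1)) ≤ q * offSq (A k) := by
    intro k
    obtain ⟨i, j, c, s, hij, hcs, hmax, hAeq, hz⟩ := hstep k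
    have hzero : ((givens n i j c s)ᵀ * A k * givens n i j c s) i j = 0 := by
      rw [← hAeq]; exact hz
    have hdec : offSq (A (k + 1)) = offSq (A k) - 2 * (A k i j) ^ 2 := by
      rw [hAeq]; exact offSq_step i j hij c s hcs (A k) (hsymm k) hzero
    have hle : offSq (A k) ≤ (n : ℝ) * ((n : ℝ) - 1) * (A k i j) ^ 2 :=
      offSq_le i j hij (A k) hmax
    have : offSq (A k) / ((n : ℝ) * ((n : ℝ) - 1)) ≤ (A k i j) ^ 2 := by
      rw [div_le_iff₀ hDpos]; linarith
    rw [hdec, hq]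
    have hexp : (1 - 2 / ((n : ℝ) * ((n : ℝ) - 1))) * offSq (A k)
        = offSq (A k) - 2 * (offSq (A k) / ((n : ℝ) * ((n : ℝ) - 1))) := by
      field_simp
    rw [hexp]
    linarith
  have main : ∀ k : ℕ, offSq (A k) ≤ q ^ k * offSq (A 0) := by
    intro k
    induction k with
    | zero => simp
    | succ m ih =>
      calc offSq (A (m + 1)) ≤ q * offSq (A m) := step m
        _ ≤ q * (q ^ m * offSq (A 0)) := by
            apply mul_le_mul_of_nonneg_left ih hq0
        _ = q ^ (m + 1) * offSq (A 0) := by ring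
  refine ⟨main, ?_⟩
  have hlim : Filter.Tendsto (fun k : ℕ => q ^ k * offSq (A 0)) Filter.atTop (nhds 0) := by
    have := tendsto_pow_atTop_nhds_zero_of_lt_one hq0 hq1
    simpa using this.mul_const (offSq (A 0))
  exact squeeze_zero (fun k => offSq_nonneg (A k)) main hlim
end

section
/- Let A be a symmetric n×n real matrix, i ≠ j, c² + s² = 1, G = G^{(i,j)}(c,s), and A' = Gᵗ · A · G with A' i j = 0. Then the sum of squares of the diagonal entries increases by exactly 2·(A i j)²: Σ_k (A' k k)² = Σ_k (A k k)² + 2·(A i j)². -/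
open Matrix

theorem jacobi_diagonal_increase (n : ℕ) (A : Matrix (Fin n) (Fin n) ℝ)
    (hA : Aᵀ = A) (i j : Fin n) (hij : i ≠ j)
    (c s : ℝ) (hcs : c ^ 2 + s ^ 2 = 1)
    (A' : Matrix (Fin n) (Fin n) ℝ)
    (hA' : A' = (givens n i j c s)ᵀ * A * givens n i j c s)
    (hzero : A' i j = 0) :
    ∑ k : Fin n, (A' k k) ^ 2 = (∑ k : Fin n, (A k k) ^ 2) + 2 * (A i j) ^ 2 := by
  set G := givens n i j c s with hG
  -- column lemmas
  have h1 : ∀ f : Fin n → ℝ, ∑ p, f p * G p i = c * f i - s * f j := by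
    intro f
    have hpt : ∀ p, f p * G p i =
        (if p = i then c * f p else 0) + (if p = j then -s * f p else 0) := by
      intro p
      simp only [hG, givens]
      split_ifs <;> simp_all <;> ring
    simp only [hpt, Finset.sum_add_distrib, Finset.sum_ite_eq', Finset.mem_univ, if_true]
    try ring
  have h2 : ∀ f : Fin n → ℝ, ∑ p, f p * G p j = s * f i + c * f j := by
    intro f
    have hpt : ∀ p, f p * G p j =
        (if p = i then s * f p else 0) + (if p = j then c * f p else 0) := by
      intro p
      simp only [hG, givens]
      split_ifs <;> simp_all <;> ring
    simp only [hpt, Finset.sum_add_distrib, Finset.sum_ite_eq', Finset.mem_univ, if_true]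
    try ring
  have h3 : ∀ (k : Fin n), k ≠ i → k ≠ j → ∀ f : Fin n → ℝ, ∑ p, f p * G p k = f k := by
    intro k hki hkj f
    have hpt : ∀ p, f p * G p k = (if p = k then f p else 0) := by
      intro p
      simp only [hG, givens]
      split_ifs <;> simp_all
    simp only [hpt, Finset.sum_ite_eq', Finset.mem_univ, if_true]
  -- entries of B = Gᵀ * A
  set B := Gᵀ * A with hB
  have hBi : ∀ q, B i q = c * A i q - s * A j q := by
    intro q
    have : B i q = ∑ p, A p q * G p i := by
      simp only [hB, mul_apply, transpose_apply]
      exact Finset.sum_congr rfl fun p _ => mul_comm _ _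
    rw [this, h1]
  have hBj : ∀ q, B j q = s * A i q + c * A j q := by
    intro q
    have : B j q = ∑ p, A p q * G p j := by
      simp only [hB, mul_apply, transpose_apply]
      exact Finset.sum_congr rfl fun p _ => mul_comm _ _
    rw [this, h2]
  have hBk : ∀ (k : Fin n), k ≠ i → k ≠ j → ∀ q, B k q = A k q := by
    intro k hki hkj q
    have : B k q = ∑ p, A p q * G p k := by
      simp only [hB, mul_apply, transpose_apply]
      exact Finset.sum_congr rfl fun p _ => mul_comm _ _
    rw [this, h3 k hki hkj]
  have hA'eq : A' = B * G := by rw [hA', hB]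
  have hAji : A j i = A i j := by
    have h := congrFun (congrFun hA j) i
    rw [transpose_apply] at h
    exact h.symm
  -- entries of A'
  have hii : A' i i = c * (c * A i i - s * A i j) - s * (c * A i j - s * A j j) := by
    rw [hA'eq, mul_apply, h1 (fun q => B i q), hBi, hBi, hAji]
  have hjj : A' j j = s * (s * A i i + c * A i j) + c * (s * A i j + c * A j j) := by
    rw [hA'eq, mul_apply, h2 (fun q => B j q), hBj, hBj, hAji]
  have hijv : A' i j = s * (c * A i i - s * A i j) + c * (c * A i j - s * A j j) := by
    rw [hA'eq, mul_apply, h2 (fun q => B i q), hBi, hBi, hAji]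
  have hkk : ∀ (k : Fin n), k ≠ i → k ≠ j → A' k k = A k k := by
    intro k hki hkj
    rw [hA'eq, mul_apply, h3 k hki hkj (fun q => B k q), hBk k hki hkj]
  rw [hijv] at hzero
  have key : (A' i i) ^ 2 + (A' j j) ^ 2 = (A i i) ^ 2 + (A j j) ^ 2 + 2 * (A i j) ^ 2 := by
    rw [hii, hjj]
    linear_combination (((A i i) ^ 2 + 2 * (A i j) ^ 2 + (A j j) ^ 2) * (c ^ 2 + s ^ 2 + 1)) * hcs
      - (2 * (s * (c * A i i - s * A i j) + c * (c * A i j - s * A j j))) * hzero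
  -- sum manipulation
  have hsum : ∀ k : Fin n, (A' k k) ^ 2 = (A k k) ^ 2 +
      ((if k = i then (A' i i) ^ 2 - (A i i) ^ 2 else 0)
        + (if k = j then (A' j j) ^ 2 - (A j j) ^ 2 else 0)) := by
    intro k
    by_cases hki : k = i
    · subst hki
      simp [hij]
    · by_cases hkj : k = j
      · subst hkj
        simp [hki]
      · simp [hki, hkj, hkk k hki hkj]
  rw [Finset.sum_congr rfl (fun k _ => hsum k)]
  simp only [Finset.sum_add_distrib, Finset.sum_ite_eq', Finset.mem_univ, if_true]
  linarith [key]
end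

section
/- Let n ≥ 2 and let (A_k) be a sequence of symmetric n×n real matrices produced by max-element Jacobi iteration (A_{k+1} = G_kᵗ · A_k · G_k, with G_k a Givens rotation annihilating a maximal-magnitude off-diagonal entry of A_k). Then for every tolerance ε > 0 there exists K such that for all k ≥ K every off-diagonal entry satisfies |A_k i j| < ε for i ≠ j; i.e., the iteration reaches any prescribed convergence tolerance in finitely many rotations. -/
open Matrix

open Finset in
private lemma jacobi_mulG_i {n : ℕ} {i j : Fin n} {c s : ℝ} (hij : i ≠ j)
    (A : Matrix (Fin n) (Fin n) ℝ) (k : Fin n) :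
    (A * givens n i j c s) k i = c * A k i - s * A k j := by
  have h : ∀ l, A k l * givens n i j c s l i =
      (if l = i then c * A k i else 0) + (if l = j then -s * A k j else 0) := by
    intro l
    by_cases h1 : l = i <;> by_cases h2 : l = j <;>
      simp [givens, h1, h2, hij, hij.symm] <;> ring
  simp [Matrix.mul_apply, h, Finset.sum_add_distrib]
  ring

open Finset in
private lemma jacobi_mulG_j {n : ℕ} {i j : Fin n} {c s : ℝ} (hij : i ≠ j)
    (A : Matrix (Fin n) (Fin n) ℝ) (k : Fin n) :
    (A * givens n i j c s) k j = s * A k i + c * A k j := by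
  have h : ∀ l, A k l * givens n i j c s l j =
      (if l = i then s * A k i else 0) + (if l = j then c * A k j else 0) := by
    intro l
    by_cases h1 : l = i <;> by_cases h2 : l = j <;>
      simp [givens, h1, h2, hij, hij.symm] <;> ring
  simp [Matrix.mul_apply, h, Finset.sum_add_distrib]

open Finset in
private lemma jacobi_mulG_other {n : ℕ} {i j : Fin n} {c s : ℝ}
    (A : Matrix (Fin n) (Fin n) ℝ) (k q : Fin n) (hqi : q ≠ i) (hqj : q ≠ j) :
    (A * givens n i j c s) k q = A k q := by
  have h : ∀ l, A k l * givens n i j c s l q = if l = q then A k q else 0 := by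
    intro l
    by_cases h1 : l = q <;> simp [givens, h1, hqi, hqj, hqi.symm]
  simp [Matrix.mul_apply, h]

open Finset in
private lemma jacobi_Gmul_i {n : ℕ} {i j : Fin n} {c s : ℝ} (hij : i ≠ j)
    (A : Matrix (Fin n) (Fin n) ℝ) (l : Fin n) :
    ((givens n i j c s)ᵀ * A) i l = c * A i l - s * A j l := by
  have h : ∀ k, (givens n i j c s) k i * A k l =
      (if k = i then c * A i l else 0) + (if k = j then -s * A j l else 0) := by
    intro k
    by_cases h1 : k = i <;> by_cases h2 : k = j <;>
      simp [givens, h1, h2, hij, hij.symm] <;> ring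
  simp [Matrix.mul_apply, Matrix.transpose_apply, h, Finset.sum_add_distrib]
  ring

open Finset in
private lemma jacobi_Gmul_j {n : ℕ} {i j : Fin n} {c s : ℝ} (hij : i ≠ j)
    (A : Matrix (Fin n) (Fin n) ℝ) (l : Fin n) :
    ((givens n i j c s)ᵀ * A) j l = s * A i l + c * A j l := by
  have h : ∀ k, (givens n i j c s) k j * A k l =
      (if k = i then s * A i l else 0) + (if k = j then c * A j l else 0) := by
    intro k
    by_cases h1 : k = i <;> by_cases h2 : k = j <;>
      simp [givens, h1, h2, hij, hij.symm] <;> ring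
  simp [Matrix.mul_apply, Matrix.transpose_apply, h, Finset.sum_add_distrib]

open Finset in
private lemma jacobi_Gmul_other {n : ℕ} {i j : Fin n} {c s : ℝ}
    (A : Matrix (Fin n) (Fin n) ℝ) (p l : Fin n) (hpi : p ≠ i) (hpj : p ≠ j) :
    ((givens n i j c s)ᵀ * A) p l = A p l := by
  have h : ∀ k, (givens n i j c s) k p * A k l = if k = p then A p l else 0 := by
    intro k
    by_cases h1 : k = p <;> simp [givens, h1, hpi, hpj, hpi.symm]
  simp [Matrix.mul_apply, Matrix.transpose_apply, h]

private lemma jacobi_givens_orth {n : ℕ} {i j : Fin n} {c s : ℝ}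
    (hij : i ≠ j) (hcs : c ^ 2 + s ^ 2 = 1) :
    (givens n i j c s)ᵀ * givens n i j c s = 1 := by
  ext p q
  by_cases hpi : p = i
  · rw [hpi, jacobi_Gmul_i hij]
    by_cases hqi : q = i
    · rw [hqi]; simp [givens, hij, hij.symm, Matrix.one_apply]; nlinarith
    · by_cases hqj : q = j
      · rw [hqj]; simp [givens, hij, hij.symm, Matrix.one_apply]; ring
      · simp [givens, hij, hij.symm, hqi, hqj, Matrix.one_apply, Ne.symm hqi, Ne.symm hqj]
  · by_cases hpj : p = j
    · rw [hpj, jacobi_Gmul_j hij]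
      by_cases hqi : q = i
      · rw [hqi]; simp [givens, hij, hij.symm, Matrix.one_apply]; ring
      · by_cases hqj : q = j
        · rw [hqj]; simp [givens, hij, hij.symm, Matrix.one_apply]; nlinarith
        · simp [givens, hij, hij.symm, hqi, hqj, Matrix.one_apply, Ne.symm hqi, Ne.symm hqj]
    · rw [jacobi_Gmul_other _ _ _ hpi hpj]
      simp [givens, hpi, hpj, Matrix.one_apply]

noncomputable def jacobiS {n : ℕ} (M : Matrix (Fin n) (Fin n) ℝ) : ℝ :=
  ∑ p, ∑ q, (M p q) ^ 2

noncomputable def jacobiOff {n : ℕ} (M : Matrix (Fin n) (Fin n) ℝ) : ℝ :=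
  jacobiS M - ∑ p, (M p p) ^ 2

private lemma jacobiS_eq_trace {n : ℕ} (M : Matrix (Fin n) (Fin n) ℝ) :
    jacobiS M = Matrix.trace (Mᵀ * M) := by
  simp [jacobiS, Matrix.trace, Matrix.mul_apply, Matrix.diag, sq]
  exact Finset.sum_comm

open Finset in
private lemma jacobiOff_eq {n : ℕ} (M : Matrix (Fin n) (Fin n) ℝ) :
    jacobiOff M = ∑ p, ∑ q ∈ Finset.univ.erase p, (M p q) ^ 2 := by
  have h : ∀ p : Fin n, ∑ q, (M p q) ^ 2
      = (M p p) ^ 2 + ∑ q ∈ Finset.univ.erase p, (M p q) ^ 2 :=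
    fun p => (Finset.add_sum_erase univ _ (mem_univ p)).symm
  simp only [jacobiOff, jacobiS, h, Finset.sum_add_distrib]
  ring

private lemma jacobiOff_nonneg {n : ℕ} (M : Matrix (Fin n) (Fin n) ℝ) : 0 ≤ jacobiOff M := by
  rw [jacobiOff_eq]; positivity

open Finset in
private lemma jacobi_sq_le_off {n : ℕ} (M : Matrix (Fin n) (Fin n) ℝ) {p q : Fin n}
    (hpq : p ≠ q) : (M p q) ^ 2 ≤ jacobiOff M := by
  rw [jacobiOff_eq]
  calc (M p q) ^ 2 ≤ ∑ l ∈ Finset.univ.erase p, (M p l) ^ 2 := by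
        apply Finset.single_le_sum (f := fun l => (M p l) ^ 2)
        · intro l _; positivity
        · simp [Ne.symm hpq]
    _ ≤ ∑ k, ∑ l ∈ Finset.univ.erase k, (M k l) ^ 2 := by
        apply Finset.single_le_sum (f := fun k => ∑ l ∈ Finset.univ.erase k, (M k l) ^ 2)
        · intro k _; positivity
        · simp

open Finset in
private lemma jacobi_off_step {n : ℕ} {i j : Fin n} {c s : ℝ}
    (hij : i ≠ j) (hcs : c ^ 2 + s ^ 2 = 1)
    {A B : Matrix (Fin n) (Fin n) ℝ} (hsym : Aᵀ = A)
    (hB : B = (givens n i j c s)ᵀ * A * givens n i j c s)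
    (hz : B i j = 0) :
    jacobiOff B = jacobiOff A - 2 * (A i j) ^ 2 := by
  set G := givens n i j c s with hG
  have hGG : G * Gᵀ = 1 := mul_eq_one_comm.mp (jacobi_givens_orth hij hcs)
  -- Frobenius norm preserved
  have hS : jacobiS B = jacobiS A := by
    rw [jacobiS_eq_trace, jacobiS_eq_trace, hB]
    have : ((Gᵀ * A * G)ᵀ) * (Gᵀ * A * G) = Gᵀ * (Aᵀ * A) * G := by
      simp only [Matrix.transpose_mul, Matrix.transpose_transpose, Matrix.mul_assoc]
      rw [← Matrix.mul_assoc G Gᵀ, hGG, Matrix.one_mul]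
    rw [this, Matrix.trace_mul_cycle, ← Matrix.mul_assoc, hGG, Matrix.one_mul]
  -- entries
  have hji : A j i = A i j := by
    nth_rewrite 1 [← hsym]
    simp [Matrix.transpose_apply]
  have hBii : B i i = c * (c * A i i - s * A j i) - s * (c * A i j - s * A j j) := by
    rw [hB, jacobi_mulG_i hij, jacobi_Gmul_i hij, jacobi_Gmul_i hij]
  have hBjj : B j j = s * (s * A i i + c * A j i) + c * (s * A i j + c * A j j) := by
    rw [hB, jacobi_mulG_j hij, jacobi_Gmul_j hij, jacobi_Gmul_j hij]
  have hBij : B i j = s * (c * A i i - s * A j i) + c * (c * A i j - s * A j j) := by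
    rw [hB, jacobi_mulG_j hij, jacobi_Gmul_i hij, jacobi_Gmul_i hij]
  have hBpp : ∀ p : Fin n, p ≠ i → p ≠ j → B p p = A p p := by
    intro p hpi hpj
    rw [hB, jacobi_mulG_other _ _ _ hpi hpj, jacobi_Gmul_other _ _ _ hpi hpj]
  -- diagonal identity
  have hE : s * (c * A i i - s * A j i) + c * (c * A i j - s * A j j) = 0 := by
    rw [← hBij]; exact hz
  have hkey : (B i i) ^ 2 + (B j j) ^ 2 = (A i i) ^ 2 + (A j j) ^ 2 + 2 * (A i j) ^ 2 := by
    rw [hBii, hBjj, hji]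
    have := hE
    rw [hji] at this
    linear_combination ((c ^ 2 + s ^ 2 + 1) * ((A i i) ^ 2 + (A j j) ^ 2 + 2 * (A i j) ^ 2)) * hcs
      - 2 * (s * (c * A i i - s * A i j) + c * (c * A i j - s * A j j)) * this
  -- diagonal sums
  have hjmem : j ∈ (univ : Finset (Fin n)).erase i := by simp [hij.symm]
  have hsplit : ∀ f : Fin n → ℝ,
      ∑ p, f p = f i + (f j + ∑ p ∈ ((univ : Finset (Fin n)).erase i).erase j, f p) := by
    intro f
    rw [← Finset.add_sum_erase univ f (mem_univ i), ← Finset.add_sum_erase _ f hjmem]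
  have hD : ∑ p, (B p p) ^ 2 = (∑ p, (A p p) ^ 2) + 2 * (A i j) ^ 2 := by
    rw [hsplit (fun p => (B p p) ^ 2), hsplit (fun p => (A p p) ^ 2)]
    have htail : ∑ p ∈ ((univ : Finset (Fin n)).erase i).erase j, (B p p) ^ 2
        = ∑ p ∈ ((univ : Finset (Fin n)).erase i).erase j, (A p p) ^ 2 := by
      apply Finset.sum_congr rfl
      intro p hp
      simp only [Finset.mem_erase] at hp
      rw [hBpp p hp.2.1 hp.1]
    rw [htail]
    linarith [hkey]
  simp only [jacobiOff, hS, hD]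
  ring

theorem max_element_jacobi_reaches_tolerance (n : ℕ) (hn : 2 ≤ n)
    (A : ℕ → Matrix (Fin n) (Fin n) ℝ)
    (hsymm : ∀ k, (A k)ᵀ = A k)
    (hstep : ∀ k, ∃ (i j : Fin n) (c s : ℝ), i ≠ j ∧ c ^ 2 + s ^ 2 = 1 ∧
        (∀ p q : Fin n, p ≠ q → |A k p q| ≤ |A k i j|) ∧
        A (k + 1) = (givens n i j c s)ᵀ * A k * givens n i j c s ∧
        A (k + 1) i j = 0) :
    ∀ ε : ℝ, 0 < ε → ∃ K : ℕ, ∀ k ≥ K, ∀ i j : Fin n, i ≠ j → |A k i j| < ε := by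
  have hnpos : (0 : ℝ) < (n : ℝ) ^ 2 := by positivity
  set r : ℝ := 1 - 2 / (n : ℝ) ^ 2 with hr
  have hn4 : (4 : ℝ) ≤ (n : ℝ) ^ 2 := by
    have : (2 : ℝ) ≤ (n : ℝ) := by exact_mod_cast hn
    nlinarith
  have hr0 : 0 ≤ r := by
    rw [hr]
    have : 2 / (n : ℝ) ^ 2 ≤ 2 / 4 := by
      apply div_le_div_of_nonneg_left (by norm_num) (by norm_num) hn4
    linarith
  have hr1 : r < 1 := by
    rw [hr]
    have : 0 < 2 / (n : ℝ) ^ 2 := by positivity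
    linarith
  -- geometric decay of the off-diagonal measure
  have hdecay : ∀ k, jacobiOff (A (k + 1)) ≤ r * jacobiOff (A k) := by
    intro k
    obtain ⟨i, j, c, s, hij, hcs, hmax, hAk, hzero⟩ := hstep k
    have hoff := jacobi_off_step hij hcs (hsymm k) hAk hzero
    -- maximality: jacobiOff (A k) ≤ n^2 * (A k i j)^2
    have hbound : jacobiOff (A k) ≤ (n : ℝ) ^ 2 * (A k i j) ^ 2 := by
      rw [jacobiOff_eq]
      have h1 : ∀ p : Fin n, ∑ q ∈ Finset.univ.erase p, (A k p q) ^ 2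
          ≤ (n : ℝ) * (A k i j) ^ 2 := by
        intro p
        calc ∑ q ∈ Finset.univ.erase p, (A k p q) ^ 2
            ≤ ∑ _q ∈ Finset.univ.erase p, (A k i j) ^ 2 := by
              apply Finset.sum_le_sum
              intro q hq
              have hpq : p ≠ q := by
                simp only [Finset.mem_erase] at hq
                exact (hq.1).symm
              have := hmax p q hpq
              calc (A k p q) ^ 2 = |A k p q| ^ 2 := (sq_abs _).symm
                _ ≤ |A k i j| ^ 2 := by
                    apply pow_le_pow_left₀ (abs_nonneg _) this
                _ = (A k i j) ^ 2 := sq_abs _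
          _ = ((Finset.univ.erase p).card : ℝ) * (A k i j) ^ 2 := by
              rw [Finset.sum_const, nsmul_eq_mul]
          _ ≤ (n : ℝ) * (A k i j) ^ 2 := by
              apply mul_le_mul_of_nonneg_right _ (sq_nonneg _)
              have : (Finset.univ.erase p).card ≤ n := by
                calc (Finset.univ.erase p).card ≤ (Finset.univ : Finset (Fin n)).card :=
                      Finset.card_le_card (Finset.erase_subset _ _)
                  _ = n := by simp
              exact_mod_cast this
      calc ∑ p, ∑ q ∈ Finset.univ.erase p, (A k p q) ^ 2
          ≤ ∑ _p : Fin n, (n : ℝ) * (A k i j) ^ 2 := Finset.sum_le_sum fun p _ => h1 p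
        _ = (n : ℝ) * ((n : ℝ) * (A k i j) ^ 2) := by
            rw [Finset.sum_const, nsmul_eq_mul]; simp
        _ = (n : ℝ) ^ 2 * (A k i j) ^ 2 := by ring
    rw [hoff, hr]
    have h2 : 2 * (A k i j) ^ 2 ≥ 2 / (n : ℝ) ^ 2 * jacobiOff (A k) := by
      rw [ge_iff_le, div_mul_eq_mul_div, div_le_iff₀ hnpos]
      nlinarith [hbound]
    linarith
  have hgeom : ∀ k, jacobiOff (A k) ≤ r ^ k * jacobiOff (A 0) := by
    intro k
    induction k with
    | zero => simp
    | succ m ih =>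
      calc jacobiOff (A (m + 1)) ≤ r * jacobiOff (A m) := hdecay m
        _ ≤ r * (r ^ m * jacobiOff (A 0)) := by
            apply mul_le_mul_of_nonneg_left ih hr0
        _ = r ^ (m + 1) * jacobiOff (A 0) := by ring
  intro ε hε
  have htend : Filter.Tendsto (fun k => r ^ k * jacobiOff (A 0)) Filter.atTop (nhds 0) := by
    have := tendsto_pow_atTop_nhds_zero_of_lt_one hr0 hr1
    simpa using this.mul_const (jacobiOff (A 0))
  have hev : ∀ᶠ k in Filter.atTop, r ^ k * jacobiOff (A 0) < ε ^ 2 := by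
    apply htend.eventually_lt_const
    positivity
  obtain ⟨K, hK⟩ := Filter.eventually_atTop.mp hev
  refine ⟨K, fun k hk i j hij => ?_⟩
  have h1 : (A k i j) ^ 2 ≤ jacobiOff (A k) := jacobi_sq_le_off _ hij
  have h2 : jacobiOff (A k) < ε ^ 2 := lt_of_le_of_lt (hgeom k) (hK k hk)
  have h3 : |A k i j| ^ 2 < ε ^ 2 := by rw [sq_abs]; linarith
  nlinarith [abs_nonneg (A k i j), h3, hε]
end
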